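/- arXiv:1801.02037 — 2 statements merged into one kernel-verified Lean document; each statement's English description precedes it below -/
import Mathlib

section
/- For every ε ∈ (0,1) there exists n₀ ∈ ℕ such that for all n ≥ n₀ the following holds: for every randomized strategy μ on deterministic strategies q : List {0, …, n} → {0,1}^n there exists z ∈ {0,1}^n with E_{q∼μ}[τ(q, OM_z, {z})] ≥ (1−ε)·n/log₂ n. -/
open scoped ENNReal

namespace BBC

variable {S V : Type*}

/-- The history of observed objective values after `t` queries:
`hist q f t = [f x₁, …, f x_t]`, where `x₁ = q []` and
`x_{t+1} = q [f x₁, …, f x_t]`. -/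
def hist (q : List V → S) (f : S → V) : ℕ → List V
  | 0 => []
  | t + 1 => hist q f t ++ [f (q (hist q f t))]

/-- `queryPt q f t` is the `(t+1)`-st queried search point `x_{t+1}`. -/
def queryPt (q : List V → S) (f : S → V) (t : ℕ) : S := q (hist q f t)

/-- The hitting time of a deterministic strategy `q` on objective `f` with
target set `M`: the least `t ≥ 1` with `x_t ∈ M`, valued in `ℕ∞`
(and `⊤` if no query ever hits `M`). -/
noncomputable def hitTime (q : List V → S) (f : S → V) (M : Set S) : ℕ∞ :=
  sInf ((fun k : ℕ => (k : ℕ∞) + 1) '' {k | queryPt q f k ∈ M})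

/-- The expected hitting time of a randomized strategy `μ` (a probability mass
function on deterministic strategies) on `(f, M)`, valued in `[0,∞]`. -/
noncomputable def expHitTime (μ : PMF (List V → S)) (f : S → V) (M : Set S) : ℝ≥0∞ :=
  ∑' q, μ q * (hitTime q f M : ℝ≥0∞)

end BBC

/-- OneMax with values in `{0,…,n}`. -/
def OMf {n : ℕ} (z x : Fin n → Bool) : Fin (n + 1) :=
  ⟨(Finset.univ.filter fun i => x i = z i).card,
    Nat.lt_succ_of_le (le_trans (Finset.card_filter_le _ _) (by simp))⟩

/-! The first `t` queries of a deterministic strategy depend only on value histories of length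
`< t`, of which there are `∑_{k<t} (n+1)^k < (n+1)^t`; so they lie in a set of fewer than
`(n+1)^t` points, independent of the target, and every target outside it is hit no earlier than
step `t + 1`. Summing over all `2^n` targets and averaging over `μ`, some `z` has expected
hitting time at least `(t + 1)(1 - (n+1)^t / 2^n)`. For `t = ⌊(1 - ε/2) n / log₂ n⌋` and large
`n`, `(n+1)^t ≤ (ε/2) 2^n` because `log (n+1) ≤ log n + 1/n`, and `(1 - ε/2)² ≥ 1 - ε` gives the bound. -/

open Finset

namespace BBC

variable {S V : Type*}

lemma hist_length (q : List V → S) (f : S → V) (t : ℕ) : (hist q f t).length = t := by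
  induction t with
  | zero => rfl
  | succ t ih => simp [hist, ih]

lemma le_hitTime_of_forall_lt {q : List V → S} {f : S → V} {M : Set S} {t : ℕ}
    (h : ∀ k < t, queryPt q f k ∉ M) : (t : ℕ∞) + 1 ≤ hitTime q f M := by
  refine le_sInf ?_
  rintro _ ⟨k, hk, rfl⟩
  have : t ≤ k := not_lt.1 fun hkt => h k hkt hk
  exact add_le_add_left (Nat.cast_le.2 this) 1

lemma le_sum_expHitTime {ι : Type*} [Fintype ι] (μ : PMF (List V → S)) (F : ι → S → V)
    (M : ι → Set S) {c : ℝ≥0∞} (h : ∀ q, c ≤ ∑ i, (hitTime q (F i) (M i) : ℝ≥0∞)) :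
    c ≤ ∑ i, expHitTime μ (F i) (M i) := by
  calc c = ∑' q, μ q * c := by rw [ENNReal.tsum_mul_right, μ.tsum_coe, one_mul]
    _ ≤ ∑' q, μ q * ∑ i, (hitTime q (F i) (M i) : ℝ≥0∞) := by gcongr with q; exact h q
    _ = ∑ i, expHitTime μ (F i) (M i) := by
      simp only [expHitTime, mul_sum]
      exact (Summable.tsum_finsetSum fun i _ => ENNReal.summable)

section QueryRange

variable [Fintype V] [DecidableEq S]

def queryRange (q : List V → S) (t : ℕ) : Finset S :=
  univ.image fun p : Σ k : Fin t, List.Vector V k => q p.2.1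

lemma queryPt_mem_queryRange (q : List V → S) (f : S → V) {k t : ℕ} (hk : k < t) :
    queryPt q f k ∈ queryRange q t :=
  mem_image.2 ⟨⟨⟨k, hk⟩, ⟨hist q f k, hist_length q f k⟩⟩, mem_univ _, rfl⟩

lemma card_queryRange_lt (hV : 2 ≤ Fintype.card V) (q : List V → S) (t : ℕ) :
    #(queryRange q t) < Fintype.card V ^ t :=
  calc #(queryRange q t) ≤ Fintype.card (Σ k : Fin t, List.Vector V k) := card_image_le
    _ = ∑ k ∈ range t, Fintype.card V ^ k := by
      simp [Fintype.card_sigma, card_vector, Fin.sum_univ_eq_sum_range]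
    _ < Fintype.card V ^ t := Nat.geomSum_lt hV fun k hk => mem_range.1 hk

lemma card_mul_le_sum_hitTime [Fintype S] (hV : 2 ≤ Fintype.card V) (q : List V → S)
    (F : S → S → V) (t : ℕ) :
    (((t + 1) * (Fintype.card S - Fintype.card V ^ t) : ℕ) : ℝ≥0∞) ≤
      ∑ z, (hitTime q (F z) {z} : ℝ≥0∞) := by
  have hR := card_queryRange_lt hV q t
  set R := queryRange q t
  have hcard : Fintype.card S - Fintype.card V ^ t ≤ #(univ \ R) := by
    rw [card_sdiff_of_subset (subset_univ R), card_univ]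
    omega
  have hlate : ∀ z ∈ univ \ R, ((t + 1 : ℕ) : ℝ≥0∞) ≤ hitTime q (F z) {z} := by
    intro z hz
    have := le_hitTime_of_forall_lt (q := q) (f := F z) (M := {z}) fun k hk hkz =>
      (mem_sdiff.1 hz).2 (Set.mem_singleton_iff.1 hkz ▸ queryPt_mem_queryRange q (F z) hk)
    exact_mod_cast ENat.toENNReal_le.2 this
  calc (((t + 1) * (Fintype.card S - Fintype.card V ^ t) : ℕ) : ℝ≥0∞)
      ≤ #(univ \ R) • ((t + 1 : ℕ) : ℝ≥0∞) := by
        rw [nsmul_eq_mul, ← Nat.cast_mul, mul_comm]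
        exact_mod_cast Nat.mul_le_mul_right _ hcard
    _ ≤ ∑ z ∈ univ \ R, (hitTime q (F z) {z} : ℝ≥0∞) := card_nsmul_le_sum _ _ _ hlate
    _ ≤ ∑ z, (hitTime q (F z) {z} : ℝ≥0∞) := sum_le_sum_of_subset sdiff_subset

lemma exists_le_card_mul_expHitTime [Fintype S] [Nonempty S] (hV : 2 ≤ Fintype.card V)
    (μ : PMF (List V → S)) (F : S → S → V) (t : ℕ) :
    ∃ z, (((t + 1) * (Fintype.card S - Fintype.card V ^ t) : ℕ) : ℝ≥0∞) ≤
      Fintype.card S * expHitTime μ (F z) {z} := by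
  set c := (((t + 1) * (Fintype.card S - Fintype.card V ^ t) : ℕ) : ℝ≥0∞)
  have hsum : c ≤ ∑ z, expHitTime μ (F z) {z} :=
    le_sum_expHitTime μ F _ fun q => card_mul_le_sum_hitTime hV q F t
  obtain ⟨z, -, hz⟩ := ENNReal.exists_le_of_sum_le (f := fun _ => c)
    (g := fun z => Fintype.card S * expHitTime μ (F z) {z}) univ_nonempty (by
      rw [sum_const, card_univ, nsmul_eq_mul, ← mul_sum]; gcongr)
  exact ⟨z, hz⟩

end QueryRange

end BBC

lemma ENNReal.ofReal_le_of_natCast_mul_le {N m : ℕ} {x : ℝ} {E : ℝ≥0∞} (hN : N ≠ 0)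
    (hx : N * x ≤ m) (hE : (m : ℝ≥0∞) ≤ N * E) : ENNReal.ofReal x ≤ E := by
  rw [← ENNReal.mul_le_mul_iff_right (Nat.cast_ne_zero.2 hN) (ENNReal.natCast_ne_top N)]
  calc (N : ℝ≥0∞) * ENNReal.ofReal x = ENNReal.ofReal (N * x) := by
        rw [ENNReal.ofReal_mul (Nat.cast_nonneg N), ENNReal.ofReal_natCast]
    _ ≤ m := by simpa using ENNReal.ofReal_le_ofReal hx
    _ ≤ N * E := hE

open Real in
lemma pow_floor_le_mul_two_pow {δ : ℝ} (hδ0 : 0 < δ) (hδ1 : δ < 1) {n : ℕ} (hn2 : 2 ≤ n)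
    (hn : (1 - log δ) / (δ * log 2) ≤ n) :
    ((n : ℝ) + 1) ^ ⌊(1 - δ) * n / logb 2 n⌋₊ ≤ δ * 2 ^ n := by
  set t := ⌊(1 - δ) * n / logb 2 n⌋₊
  have hn2' : (2 : ℝ) ≤ n := by exact_mod_cast hn2
  have hn0 : (0 : ℝ) < n := by linarith
  have hl2 : 0 < log 2 := log_pos one_lt_two
  have hl2n : log 2 ≤ log n := log_le_log two_pos hn2'
  have hln : 0 < log n := hl2.trans_le hl2n
  have ht : (t : ℝ) ≤ (1 - δ) * n * log 2 / log n := by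
    have := Nat.floor_le (a := (1 - δ) * n / logb 2 n) (by rw [logb]; positivity)
    exact this.trans_eq (by rw [logb, div_div_eq_mul_div])
  have hsucc : log (n + 1) ≤ log n + 1 / n := by
    have := log_le_sub_one_of_pos (x := (n + 1) / n) (by positivity)
    rw [log_div (by positivity) hn0.ne'] at this
    have e : ((n : ℝ) + 1) / n - 1 = 1 / n := by field_simp; ring
    linarith
  have hlarge : 1 - log δ ≤ δ * n * log 2 := by
    rw [div_le_iff₀ (by positivity)] at hn; linarith
  have hlog : t * log (n + 1) ≤ log δ + n * log 2 :=
    calc t * log (n + 1) ≤ t * (log n + 1 / n) := by gcongr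
      _ = t * log n + t / n := by ring
      _ ≤ (1 - δ) * n * log 2 + (1 - δ) * log 2 / log n := by
        refine add_le_add ((le_div_iff₀ hln).1 ht) ?_
        calc (t : ℝ) / n ≤ (1 - δ) * n * log 2 / log n / n := by gcongr
          _ = (1 - δ) * log 2 / log n := by field_simp
      _ ≤ (1 - δ) * n * log 2 + 1 := by
        gcongr
        rw [div_le_one hln]; nlinarith
      _ ≤ log δ + n * log 2 := by nlinarith
  rw [← log_le_log_iff (by positivity) (by positivity), log_pow,
    log_mul hδ0.ne' (by positivity), log_pow]
  exact hlog

lemma two_pow_mul_le_of_pow_floor_le {ε : ℝ} (hε1 : ε < 1) (n : ℕ)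
    (hpow : ((n : ℝ) + 1) ^ ⌊(1 - ε / 2) * n / Real.logb 2 n⌋₊ ≤ ε / 2 * 2 ^ n) :
    2 ^ n * ((1 - ε) * n / Real.logb 2 n) ≤
      (⌊(1 - ε / 2) * n / Real.logb 2 n⌋₊ + 1) *
        (2 ^ n - ((n : ℝ) + 1) ^ ⌊(1 - ε / 2) * n / Real.logb 2 n⌋₊) := by
  set a := (n : ℝ) / Real.logb 2 n
  have ha : 0 ≤ a := by unfold a Real.logb; positivity
  have hx : (1 - ε / 2) * a < ⌊(1 - ε / 2) * n / Real.logb 2 n⌋₊ + 1 := by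
    rw [mul_div_assoc]; exact Nat.lt_floor_add_one _
  calc 2 ^ n * ((1 - ε) * n / Real.logb 2 n) = (1 - ε) * (a * 2 ^ n) := by
        rw [mul_div_assoc]; ring
    _ ≤ (1 - ε / 2) ^ 2 * (a * 2 ^ n) := by gcongr; nlinarith [sq_nonneg ε]
    _ = (1 - ε / 2) * a * ((1 - ε / 2) * 2 ^ n) := by ring
    _ ≤ _ := mul_le_mul hx.le (by linarith) (mul_nonneg (by linarith) (by positivity))
      (by positivity)

/-- Erdős–Rényi lower bound: for every `ε ∈ (0,1)` and all large enough `n`,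
every randomized strategy needs at least `(1−ε)·n/log₂ n` expected queries on
some OneMax instance. -/
theorem stmt2 : ∀ ε : ℝ, 0 < ε → ε < 1 → ∃ n₀ : ℕ, ∀ n : ℕ, n₀ ≤ n →
    ∀ μ : PMF (List (Fin (n + 1)) → (Fin n → Bool)),
      ∃ z : Fin n → Bool,
        ENNReal.ofReal ((1 - ε) * n / Real.logb 2 n) ≤ BBC.expHitTime μ (OMf z) {z} := by
  intro ε hε0 hε1
  refine ⟨max 2 ⌈(1 - Real.log (ε / 2)) / (ε / 2 * Real.log 2)⌉₊, fun n hn μ => ?_⟩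
  have hpow := pow_floor_le_mul_two_pow (half_pos hε0) (by linarith) (le_of_max_le_left hn)
    (Nat.ceil_le.1 (le_of_max_le_right hn))
  set t := ⌊(1 - ε / 2) * n / Real.logb 2 n⌋₊
  have hpow_nat : (n + 1) ^ t ≤ 2 ^ n := by
    exact_mod_cast hpow.trans (mul_le_of_le_one_left (by positivity) (by linarith))
  obtain ⟨z, hz⟩ := BBC.exists_le_card_mul_expHitTime (by simp; omega) μ OMf t
  simp only [Fintype.card_fin, Fintype.card_fun, Fintype.card_bool] at hz
  refine ⟨z, ENNReal.ofReal_le_of_natCast_mul_le (pow_ne_zero n two_ne_zero) ?_ hz⟩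
  rw [Nat.cast_mul, Nat.cast_sub hpow_nat]
  push_cast
  exact two_pow_mul_le_of_pow_floor_le hε1 n hpow
end

section
/- For every integer n ≥ 1 and z ∈ {0,1}^n, define BV_z : {0,1}^n → ℕ by BV_z(x) = Σ_{i=1}^n 2^{i−1}·𝟙(x_i = z_i); its unique maximizer is z. Then the infimum, over all randomized strategies μ on deterministic strategies q : List ℕ → {0,1}^n, of sup_{z ∈ {0,1}^n} E_{q∼μ}[τ(q, BV_z, {z})] equals 2 − 2^{−n}; concretely, (a) for every randomized strategy μ there exists z with E_{q∼μ}[τ(q, BV_z, {z})] ≥ 2 − 2^{−n}, and (b) there exists a randomized strategy μ with E_{q∼μ}[τ(q, BV_z, {z})] ≤ 2 − 2^{−n} for every z. -/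
open scoped ENNReal

/-- The generalized binary-value function `BV_z`. -/
def BV {n : ℕ} (z x : Fin n → Bool) : ℕ :=
  ∑ i : Fin n, if x i = z i then 2 ^ (i : ℕ) else 0

/-
Lower bound: the first query `x₁ = q []` does not depend on `f`, so some `z` is hit by it with
probability at most `2⁻ⁿ`; every other run needs at least two queries, which gives expected hitting
time at least `2 - 2⁻ⁿ`.

Upper bound: query a uniformly random `x`. The value `BV_z(x) = ∑ 2^i [x_i = z_i]` is the binary
expansion of the set where `x` and `z` agree, so it determines `z`, which is queried next. The hitting
time is `1` with probability `2⁻ⁿ` and `2` otherwise.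
-/

open Function

theorem PMF.exists_apply_le_inv_card {α : Type*} [Fintype α] [Nonempty α] (p : PMF α) :
    ∃ a, p a ≤ (Fintype.card α : ℝ≥0∞)⁻¹ := by
  have hsum : ∑ a, p a ≤ ∑ _a : α, (Fintype.card α : ℝ≥0∞)⁻¹ := by
    rw [show ∑ a, p a = 1 by simpa [tsum_fintype] using p.tsum_coe, Finset.sum_const,
      Finset.card_univ, nsmul_eq_mul, ENNReal.mul_inv_cancel (by simp) (by simp)]
  obtain ⟨a, -, ha⟩ := ENNReal.exists_le_of_sum_le Finset.univ_nonempty hsum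
  exact ⟨a, ha⟩

namespace BBC

variable {S V : Type*}

section HitTime

variable (q : List V → S) (f : S → V) (M : Set S)

theorem one_le_hitTime : 1 ≤ hitTime q f M :=
  le_sInf <| by
    rintro _ ⟨k, -, rfl⟩
    exact le_add_self

theorem two_le_hitTime (h : q [] ∉ M) : 2 ≤ hitTime q f M :=
  le_sInf <| by
    rintro _ ⟨k | k, hk, rfl⟩
    · exact absurd hk h
    · change 2 ≤ ((k + 1 : ℕ) : ℕ∞) + 1
      rw [Nat.cast_succ, add_assoc, one_add_one_eq_two]
      exact le_add_self

theorem hitTime_le {k : ℕ} (h : queryPt q f k ∈ M) : hitTime q f M ≤ k + 1 :=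
  sInf_le ⟨k, h, rfl⟩

end HitTime

theorem two_le_expHitTime_add (μ : PMF (List V → S)) (f : S → V) (M : Set S) :
    2 ≤ expHitTime μ f M + (μ.map fun q => q []).toOuterMeasure M := by
  rw [PMF.toOuterMeasure_map_apply, PMF.toOuterMeasure_apply, expHitTime, ← ENNReal.tsum_add]
  calc (2 : ℝ≥0∞) = ∑' q, μ q * 2 := by rw [ENNReal.tsum_mul_right, μ.tsum_coe, one_mul]
    _ ≤ _ := ENNReal.tsum_le_tsum fun q => ?_
  by_cases hq : q [] ∈ M
  · have h1 : (1 : ℝ≥0∞) ≤ hitTime q f M := mod_cast one_le_hitTime q f M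
    calc μ q * 2 = μ q * 1 + μ q := by rw [mul_one, mul_two]
      _ ≤ μ q * hitTime q f M + _ := by
        rw [Set.indicator_of_mem (show q ∈ (fun q => q []) ⁻¹' M from hq)]
        gcongr
  · have h2 : (2 : ℝ≥0∞) ≤ hitTime q f M := mod_cast two_le_hitTime q f M hq
    calc μ q * 2 ≤ μ q * hitTime q f M := by gcongr
      _ ≤ _ := le_self_add

theorem exists_two_sub_inv_card_le_expHitTime [Fintype S] [Nonempty S] (f : S → S → V)
    (μ : PMF (List V → S)) :
    ∃ z, 2 - (Fintype.card S : ℝ≥0∞)⁻¹ ≤ expHitTime μ (f z) {z} := by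
  obtain ⟨z, hz⟩ := (μ.map fun q => q []).exists_apply_le_inv_card
  refine ⟨z, tsub_le_iff_right.mpr ?_⟩
  calc (2 : ℝ≥0∞) ≤ expHitTime μ (f z) {z} + (μ.map fun q => q []) z := by
        simpa only [PMF.toOuterMeasure_apply_singleton] using two_le_expHitTime_add μ (f z) {z}
    _ ≤ _ := by gcongr

theorem expHitTime_map {α : Type*} (g : α → List V → S) (p : PMF α) (f : S → V) (M : Set S) :
    expHitTime (p.map g) f M = ∑' a, p a * hitTime (g a) f M := by
  simp_rw [expHitTime, PMF.map_apply, ← ENNReal.tsum_mul_right]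
  rw [ENNReal.tsum_comm]
  refine tsum_congr fun a => (tsum_eq_single (g a) fun q hq => ?_).trans ?_
  · simp [hq]
  · simp

section Decode

variable [Nonempty S] (f : S → S → V)

noncomputable def decodeStrategy (x : S) : List V → S
  | [] => x
  | v :: _ => invFun (fun z => f z x) v

theorem hitTime_decodeStrategy_add_le [DecidableEq S] (hf : ∀ x, Injective fun z => f z x)
    (x z : S) :
    (hitTime (decodeStrategy f x) (f z) {z} : ℝ≥0∞) + (if x = z then 1 else 0) ≤ 2 := by
  by_cases hxz : x = z
  · subst hxz
    have h : hitTime (decodeStrategy f x) (f x) {x} ≤ 1 := by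
      simpa using hitTime_le (decodeStrategy f x) (f x) {x} (k := 0) rfl
    rw [if_pos rfl, ← one_add_one_eq_two]
    gcongr
    exact mod_cast h
  · have hdecode : queryPt (decodeStrategy f x) (f z) 1 = z := leftInverse_invFun (hf x) z
    have h : hitTime (decodeStrategy f x) (f z) {z} ≤ 2 := by
      simpa [one_add_one_eq_two] using hitTime_le (decodeStrategy f x) (f z) {z} (k := 1) hdecode
    rw [if_neg hxz, add_zero]
    exact mod_cast h

theorem exists_expHitTime_le_two_sub_inv_card [Fintype S] (hf : ∀ x, Injective fun z => f z x) :
    ∃ μ : PMF (List V → S), ∀ z, expHitTime μ (f z) {z} ≤ 2 - (Fintype.card S : ℝ≥0∞)⁻¹ := by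
  classical
  refine ⟨(PMF.uniformOfFintype S).map (decodeStrategy f), fun z => ?_⟩
  set c : ℝ≥0∞ := (Fintype.card S : ℝ≥0∞)⁻¹
  refine ENNReal.le_sub_of_add_le_right (by simp [c]) ?_
  calc expHitTime _ (f z) {z} + c
      = ∑ x, c * ((hitTime (decodeStrategy f x) (f z) {z} : ℝ≥0∞) + if x = z then 1 else 0) := by
        simp [expHitTime_map, tsum_fintype, mul_add, Finset.sum_add_distrib, c]
    _ ≤ ∑ _x : S, c * 2 := by
        gcongr with x
        exact hitTime_decodeStrategy_add_le f hf x z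
    _ = 2 := by
        rw [Finset.sum_const, Finset.card_univ, nsmul_eq_mul, ← mul_assoc,
          ENNReal.mul_inv_cancel (by simp) (by simp), one_mul]

end Decode

end BBC

theorem BV_eq_sum_two_pow {n : ℕ} (z x : Fin n → Bool) :
    BV z x = ∑ i ∈ ({i | x i = z i} : Finset (Fin n)).map Fin.valEmbedding, 2 ^ i := by
  rw [Finset.sum_map, Finset.sum_filter]
  rfl

theorem BV_left_injective {n : ℕ} (x : Fin n → Bool) : Injective fun z => BV z x := by
  intro z z' h
  simp only [BV_eq_sum_two_pow] at h
  have hagree := Finset.ext_iff.mp (Finset.map_injective _ (Finset.geomSum_injective le_rfl h))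
  funext i
  have := hagree i
  simp only [Finset.mem_filter, Finset.mem_univ, true_and] at this
  cases hx : x i <;> cases hz : z i <;> cases hz' : z' i <;> simp_all

theorem stmt4_general (n : ℕ) :
    (∀ μ : PMF (List ℕ → (Fin n → Bool)), ∃ z : Fin n → Bool,
        ENNReal.ofReal (2 - (2 : ℝ) ^ (-(n : ℤ))) ≤ BBC.expHitTime μ (BV z) {z}) ∧
    (∃ μ : PMF (List ℕ → (Fin n → Bool)), ∀ z : Fin n → Bool,
        BBC.expHitTime μ (BV z) {z} ≤ ENNReal.ofReal (2 - (2 : ℝ) ^ (-(n : ℤ)))) := by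
  have hconst : ENNReal.ofReal (2 - (2 : ℝ) ^ (-(n : ℤ)))
      = 2 - (Fintype.card (Fin n → Bool) : ℝ≥0∞)⁻¹ := by
    rw [zpow_neg, zpow_natCast, ENNReal.ofReal_sub _ (by positivity),
      ENNReal.ofReal_inv_of_pos (by positivity), ENNReal.ofReal_pow zero_le_two]
    simp
  rw [hconst]
  exact ⟨BBC.exists_two_sub_inv_card_le_expHitTime BV,
    BBC.exists_expHitTime_le_two_sub_inv_card BV BV_left_injective⟩

/-- The unrestricted black-box complexity of `{BV_z | z}` is exactly `2 − 2^{−n}`. -/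
theorem stmt4 (n : ℕ) (hn : 1 ≤ n) :
    (∀ μ : PMF (List ℕ → (Fin n → Bool)), ∃ z : Fin n → Bool,
        ENNReal.ofReal (2 - (2 : ℝ) ^ (-(n : ℤ))) ≤ BBC.expHitTime μ (BV z) {z}) ∧
    (∃ μ : PMF (List ℕ → (Fin n → Bool)), ∀ z : Fin n → Bool,
        BBC.expHitTime μ (BV z) {z} ≤ ENNReal.ofReal (2 - (2 : ℝ) ^ (-(n : ℤ)))) :=
  stmt4_general n
end
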